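/- arXiv:2110.05662 — 2 statements merged into one kernel-verified Lean document; each statement's English description precedes it below -/
import Mathlib

section
/- For all integers n ≥ 0 and f with 0 ≤ f ≤ n, the sum ∑_{d=0}^{f} (-1)^d q^{d(d+1)/2 - fd - f(n-f+1)} (q)_{n-f+d} (q)_f / ((q)_{f-d} (q)_{n-f} (q)_d) equals 1, where (q)_m = (q;q)_m. -/
/-- `(q)_m = (q;q)_m = ∏_{k=1}^m (1 - q^k)`. -/
noncomputable def qfac (q : ℂ) (m : ℕ) : ℂ := ∏ k ∈ Finset.range m, (1 - q ^ (k + 1))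

/-!
Put `x = q^(n-f+1)`. Then `(q)_{n-f+d} / (q)_{n-f}` is the q-Pochhammer symbol `(x;q)_d` and
`(q)_f / ((q)_d (q)_{f-d})` is the Gaussian binomial `[f, d]_q`, so the sum equals
`q^(-f(n-f+1)) * ∑_d (-1)^d q^(d(d+1)/2 - fd) [f, d]_q (x;q)_d`. The last sum is the expansion of
`x^f` in the basis `(x;q)_d`: by induction on `f`, the q-Pascal rule
`[f+1, d+1] = [f, d+1] + q^(f-d) [f, d]` makes the sum for `f + 1` telescope to `x` times the sum
for `f`.
-/

open Finset

section QAnalogues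

variable {R : Type*} [CommRing R] (q : R)

def qPoch (x : R) (d : ℕ) : R := ∏ k ∈ range d, (1 - x * q ^ k)

-- `f - d` truncates only when `d > f`, where `qBinom q f d = 0`.
def qBinom : ℕ → ℕ → R
  | _, 0 => 1
  | 0, _ + 1 => 0
  | f + 1, d + 1 => qBinom f (d + 1) + q ^ (f - d) * qBinom f d

@[simp] lemma qPoch_zero (x : R) : qPoch q x 0 = 1 := prod_range_zero _

lemma qPoch_succ (x : R) (d : ℕ) : qPoch q x (d + 1) = qPoch q x d * (1 - x * q ^ d) :=
  prod_range_succ _ _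

lemma qPoch_add (x : R) (m d : ℕ) :
    qPoch q x (m + d) = qPoch q x m * qPoch q (x * q ^ m) d := by
  simp only [qPoch, prod_range_add, pow_add, mul_assoc]

@[simp] lemma qBinom_zero_right (f : ℕ) : qBinom q f 0 = 1 := by
  cases f <;> rfl

lemma qBinom_succ_succ (f d : ℕ) :
    qBinom q (f + 1) (d + 1) = qBinom q f (d + 1) + q ^ (f - d) * qBinom q f d := rfl

lemma qBinom_of_lt {f d : ℕ} (h : f < d) : qBinom q f d = 0 := by
  induction f generalizing d with
  | zero => obtain ⟨d, rfl⟩ := Nat.exists_eq_succ_of_ne_zero h.ne'; rfl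
  | succ f ih =>
    obtain ⟨d, rfl⟩ := Nat.exists_eq_succ_of_ne_zero (Nat.ne_zero_of_lt h)
    rw [qBinom_succ_succ, ih (by omega), ih (by omega), mul_zero, add_zero]

@[simp] lemma qBinom_self (f : ℕ) : qBinom q f f = 1 := by
  induction f with
  | zero => rfl
  | succ f ih => rw [qBinom_succ_succ, qBinom_of_lt q (Nat.lt_succ_self f), ih, Nat.sub_self]; ring

lemma qBinom_mul_qPoch_mul_qPoch (d k : ℕ) :
    qBinom q (d + k) d * qPoch q q d * qPoch q q k = qPoch q q (d + k) := by
  induction d generalizing k with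
  | zero => simp
  | succ d ihd =>
    induction k with
    | zero => simp
    | succ k ihk =>
      have h₁ := ihd (k + 1)
      rw [show d + 1 + k = d + k + 1 by omega] at ihk
      rw [show d + (k + 1) = d + k + 1 by omega] at h₁
      rw [show d + 1 + (k + 1) = d + k + 1 + 1 by omega, qBinom_succ_succ,
        show d + k + 1 - d = k + 1 by omega, qPoch_succ q q (d + k + 1)]
      simp only [qPoch_succ q q d, qPoch_succ q q k] at ihk h₁ ⊢
      linear_combination (1 - q * q ^ k) * ihk + q ^ (k + 1) * (1 - q * q ^ d) * h₁

end QAnalogues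

lemma qfac_eq_qPoch (q : ℂ) (m : ℕ) : qfac q m = qPoch q q m := by
  simp only [qfac, qPoch, pow_succ']

lemma Int.add_one_mul_add_two_ediv_two (d : ℤ) :
    (d + 1) * (d + 2) / 2 = d * (d + 1) / 2 + (d + 1) := by
  rw [show (d + 1) * (d + 2) = d * (d + 1) + (d + 1) * 2 by ring,
    Int.add_mul_ediv_right _ _ two_ne_zero]

section QNewton

variable {K : Type*} [Field K] {q : K}

-- The exponent parameter `s` is kept apart from the binomial's `f` so that the telescoping
-- terms of the induction step are again of this form.
def qNewtonTerm (q x : K) (s f d : ℕ) : K :=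
  (-1) ^ d * q ^ ((d : ℤ) * (d + 1) / 2 - s * d) * qBinom q f d * qPoch q x d

lemma qNewtonTerm_succ_succ (hq : q ≠ 0) (x : K) {f e : ℕ} (he : e ≤ f) :
    qNewtonTerm q x (f + 1) (f + 1) (e + 1) =
      qNewtonTerm q x (f + 1) f (e + 1) - qNewtonTerm q x (f + 1) f e +
        x * qNewtonTerm q x f f e := by
  have hpascal : q ^ (((e + 1 : ℕ) : ℤ) * ((e + 1 : ℕ) + 1) / 2 - (f + 1 : ℕ) * (e + 1 : ℕ)) *
      q ^ (f - e) = q ^ ((e : ℤ) * (e + 1) / 2 - (f + 1 : ℕ) * e) := by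
    rw [← zpow_natCast q (f - e), ← zpow_add₀ hq]
    push_cast [he]
    rw [show (e : ℤ) + 1 + 1 = e + 2 by ring, Int.add_one_mul_add_two_ediv_two]
    ring_nf
  have hpoch : q ^ ((e : ℤ) * (e + 1) / 2 - (f + 1 : ℕ) * e) * q ^ e =
      q ^ ((e : ℤ) * (e + 1) / 2 - f * e) := by
    rw [← zpow_natCast q e, ← zpow_add₀ hq]
    push_cast
    ring_nf
  simp only [qNewtonTerm, qBinom_succ_succ, qPoch_succ]
  linear_combination (-(-1) ^ e * qBinom q f e * qPoch q x e * (1 - x * q ^ e)) * hpascal +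
    (x * (-1) ^ e * qBinom q f e * qPoch q x e) * hpoch

theorem sum_qNewtonTerm (hq : q ≠ 0) (x : K) (f : ℕ) :
    ∑ d ∈ range (f + 1), qNewtonTerm q x f f d = x ^ f := by
  induction f with
  | zero => simp [qNewtonTerm]
  | succ f ih =>
    rw [sum_range_succ', sum_congr rfl fun e he ↦
      qNewtonTerm_succ_succ hq x (mem_range_succ_iff.mp he), sum_add_distrib,
      sum_range_sub (qNewtonTerm q x (f + 1) f), ← mul_sum, ih]
    simp [qNewtonTerm, qBinom_of_lt q (Nat.lt_succ_self f), pow_succ']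

end QNewton

lemma qfac_eq_qBinom_mul {q : ℂ} {f d : ℕ} (h : d ≤ f) :
    qfac q f = qBinom q f d * qfac q d * qfac q (f - d) := by
  obtain ⟨k, rfl⟩ := Nat.exists_eq_add_of_le h
  simp only [qfac_eq_qPoch, Nat.add_sub_cancel_left, qBinom_mul_qPoch_mul_qPoch]

lemma qfac_add (q : ℂ) (m d : ℕ) : qfac q (m + d) = qfac q m * qPoch q (q ^ (m + 1)) d := by
  rw [qfac_eq_qPoch, qfac_eq_qPoch, qPoch_add, ← pow_succ']

/-- The vortex-partition-function evaluation for the unknot with one kink equals 1: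
`∑_{d=0}^f (-1)^d q^{d(d+1)/2 - fd - f(n-f+1)} (q)_{n-f+d}(q)_f/((q)_{f-d}(q)_{n-f}(q)_d) = 1`. -/
theorem unknot_kink (q : ℂ) (hq : q ≠ 0) (hfac : ∀ m : ℕ, qfac q m ≠ 0)
    (n f : ℕ) (hf : f ≤ n) :
    ∑ d ∈ Finset.range (f + 1),
        (-1) ^ d *
          q ^ ((d : ℤ) * ((d : ℤ) + 1) / 2 - (f : ℤ) * d - (f : ℤ) * ((n : ℤ) - f + 1)) *
          qfac q (n - f + d) * qfac q f / (qfac q (f - d) * qfac q (n - f) * qfac q d)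
      = 1 := by
  obtain ⟨m, rfl⟩ := Nat.exists_eq_add_of_le hf
  have hcancel : q ^ (-((f : ℤ) * (m + 1))) * (q ^ (m + 1)) ^ f = 1 := by
    rw [← pow_mul, ← zpow_natCast, ← zpow_add₀ hq]
    convert zpow_zero q using 2
    push_cast
    ring
  refine Eq.trans ?_ hcancel
  rw [← sum_qNewtonTerm hq (q ^ (m + 1)) f, mul_sum]
  refine sum_congr rfl fun d hd ↦ ?_
  rw [show (d : ℤ) * (d + 1) / 2 - f * d - f * ((f + m : ℕ) - f + 1) =
      -(f * (m + 1)) + ((d : ℤ) * (d + 1) / 2 - f * d) by push_cast; ring,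
    zpow_add₀ hq, Nat.add_sub_cancel_left, qfac_add,
    qfac_eq_qBinom_mul (mem_range_succ_iff.mp hd)]
  field_simp [hfac]
  simp only [qNewtonTerm]
  ring
end

section
/- The trefoil vortex sum formula: for every nonnegative integer n, the product of degenerate inverse R-matrix entries with the local-minimum factor, summed over 0 ≤ d ≤ n, gives q^{3n(n+2)/4} ∑_{d=0}^{n} (R^{-1})^{0,d}_{d,0} (R^{-1})^{d,0}_{d,0} (R^{-1})^{d,0}_{0,d} · q^{d - n/2} = ∑_{d=0}^{n} q^{(n+1)d+n} (q)_n/(q)_{n-d}. -/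
/-- The inverse R-matrix entry `(R⁻¹)^{ab}_{cd}(q)` for the `n`-colored Jones polynomial,
where `t` is a fixed fourth root of `q`. -/
noncomputable def Rinv (q t : ℂ) (n a b c d : ℕ) : ℂ :=
  t ^ (-4 * (a : ℤ) * b + 2 * (n : ℤ) * ((b : ℤ) + d) - (n : ℤ) ^ 2) *
    qfac q c * qfac q (n - d) / (qfac q (n - a) * qfac q b * qfac q (a - d))

@[simp]
lemma qfac_zero (q : ℂ) : qfac q 0 = 1 := Finset.prod_range_zero _

section DegenerateEntries

variable {q t : ℂ} {n d : ℕ}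

lemma Rinv_zero_self_self_zero (hn : qfac q n ≠ 0) (hd : qfac q d ≠ 0) :
    Rinv q t n 0 d d 0 = t ^ (2 * (n : ℤ) * d - n ^ 2) := by
  simp only [Rinv, Nat.sub_zero, qfac_zero]
  field_simp
  ring_nf

lemma Rinv_self_zero_self_zero (hd : qfac q d ≠ 0) :
    Rinv q t n d 0 d 0 = t ^ (-(n : ℤ) ^ 2) * qfac q n / qfac q (n - d) := by
  simp only [Rinv, Nat.sub_zero, qfac_zero]
  field_simp
  ring_nf

lemma Rinv_self_zero_zero_self (hnd : qfac q (n - d) ≠ 0) :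
    Rinv q t n d 0 0 d = t ^ (2 * (n : ℤ) * d - n ^ 2) := by
  simp only [Rinv, Nat.sub_self, qfac_zero]
  field_simp
  ring_nf

lemma trefoil_summand (ht : t ^ 4 = q) (ht0 : t ≠ 0) (hn : qfac q n ≠ 0) (hd : qfac q d ≠ 0)
    (hnd : qfac q (n - d) ≠ 0) :
    t ^ (3 * (n : ℤ) * ((n : ℤ) + 2)) *
        (Rinv q t n 0 d d 0 * Rinv q t n d 0 d 0 * Rinv q t n d 0 0 d *
          t ^ (4 * (d : ℤ) - 2 * n))
      = q ^ ((n + 1) * d + n) * qfac q n / qfac q (n - d) := by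
  have hexp : t ^ (3 * (n : ℤ) * ((n : ℤ) + 2)) * t ^ (2 * (n : ℤ) * d - n ^ 2) *
      t ^ (-(n : ℤ) ^ 2) * t ^ (2 * (n : ℤ) * d - n ^ 2) * t ^ (4 * (d : ℤ) - 2 * n)
      = q ^ ((n + 1) * d + n) := by
    rw [← ht, ← pow_mul, ← zpow_natCast]
    simp only [← zpow_add₀ ht0]
    congr 1
    push_cast
    ring
  rw [Rinv_zero_self_self_zero hn hd, Rinv_self_zero_self_zero hd, Rinv_self_zero_zero_self hnd,
    ← hexp]
  ring

end DegenerateEntries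

/-- Trefoil vortex sum:
`q^{3n(n+2)/4} ∑_{d=0}^n (R⁻¹)^{0,d}_{d,0} (R⁻¹)^{d,0}_{d,0} (R⁻¹)^{d,0}_{0,d} μ_d
= ∑_{d=0}^n q^{(n+1)d+n} (q)_n/(q)_{n-d}`, where `μ_d = q^{d-n/2}` and `t⁴ = q`. -/
theorem trefoil_vortex_sum (q t : ℂ) (ht : t ^ 4 = q) (ht0 : t ≠ 0)
    (hfac : ∀ m : ℕ, qfac q m ≠ 0) (n : ℕ) :
    t ^ (3 * (n : ℤ) * ((n : ℤ) + 2)) *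
        ∑ d ∈ Finset.range (n + 1),
          Rinv q t n 0 d d 0 * Rinv q t n d 0 d 0 * Rinv q t n d 0 0 d *
            t ^ (4 * (d : ℤ) - 2 * n)
      = ∑ d ∈ Finset.range (n + 1), q ^ ((n + 1) * d + n) * qfac q n / qfac q (n - d) := by
  rw [Finset.mul_sum]
  exact Finset.sum_congr rfl fun d _ =>
    trefoil_summand ht ht0 (hfac n) (hfac d) (hfac (n - d))
end
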